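/- Let m ≥ 1 and let w : Fin m → ℕ be a sequence of positive even integers with w 0 = 2, w (m-1) = 2, and w(k+1) = w(k) + 2 or w(k+1) = w(k) - 2 for every k < m-1. Extend w by the convention w(-1) = w(m) = 0, and call an index k a 'thick index' if w(k) > w(k-1) and w(k) > w(k+1), and a 'thin index' if w(k) < w(k-1) and w(k) < w(k+1) (so thin indices are interior). Then 2 · (∑_{k} w(k)) = (∑_{k thick} w(k)²) − (∑_{k thin} w(k)²). -/
import Mathlib


/-- Extension of a width sequence `w : {0,...,m-1} → ℕ` by `0` on both sides,
shifted by one: `ext m w 0 = 0` (the value "w(-1)"), `ext m w (k+1) = w k`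
for `k < m`, and `ext m w (m+1) = 0` (the value "w(m)"). -/
def ext (m : ℕ) (w : ℕ → ℕ) : ℕ → ℕ :=
  fun k => if 1 ≤ k ∧ k ≤ m then w (k - 1) else 0

/-- An index `k < m` is thick if `w k > w (k-1)` and `w k > w (k+1)`
(with the convention `w (-1) = w m = 0`). -/
def IsThick (m : ℕ) (w : ℕ → ℕ) (k : ℕ) : Prop :=
  ext m w k < ext m w (k + 1) ∧ ext m w (k + 2) < ext m w (k + 1)

/-- An index `k < m` is thin if `w k < w (k-1)` and `w k < w (k+1)`. -/
def IsThin (m : ℕ) (w : ℕ → ℕ) (k : ℕ) : Prop :=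
  ext m w (k + 1) < ext m w k ∧ ext m w (k + 1) < ext m w (k + 2)

instance (m : ℕ) (w : ℕ → ℕ) (k : ℕ) : Decidable (IsThick m w k) := by
  unfold IsThick; exact inferInstance

instance (m : ℕ) (w : ℕ → ℕ) (k : ℕ) : Decidable (IsThin m w k) := by
  unfold IsThin; exact inferInstance

theorem width_formula (m : ℕ) (hm : 1 ≤ m) (w : ℕ → ℕ)
    (hpos : ∀ k < m, 0 < w k) (heven : ∀ k < m, Even (w k))
    (h0 : w 0 = 2) (hlast : w (m - 1) = 2)
    (hstep : ∀ k, k < m - 1 → w (k + 1) = w k + 2 ∨ w k = w (k + 1) + 2) :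
    2 * (∑ k ∈ Finset.range m, (w k : ℤ)) =
      (∑ k ∈ (Finset.range m).filter (fun k => IsThick m w k), (w k : ℤ) ^ 2) -
      (∑ k ∈ (Finset.range m).filter (fun k => IsThin m w k), (w k : ℤ) ^ 2) := by
  set E : ℕ → ℕ := ext m w with hE
  have hE0 : E 0 = 0 := by simp [hE, ext]
  have hEk : ∀ k < m, E (k + 1) = w k := by
    intro k hk
    simp only [hE, ext]
    rw [if_pos ⟨by omega, by omega⟩]
    simp
  have hEm1 : E (m + 1) = 0 := by
    simp only [hE, ext]
    rw [if_neg (by omega)]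
  have hEm : E m = 2 := by
    have h := hEk (m - 1) (by omega)
    rw [Nat.sub_add_cancel hm] at h
    rw [h, hlast]
  have hstepE : ∀ k ≤ m, E (k + 1) = E k + 2 ∨ E k = E (k + 1) + 2 := by
    intro k hk
    rcases Nat.eq_zero_or_pos k with h0k | h0k
    · subst h0k
      left
      rw [hE0, hEk 0 hm, h0]
    rcases eq_or_lt_of_le hk with hkm | hkm
    · subst hkm
      right
      rw [hEm1, hEm]
    · have hk1 : E (k + 1) = w k := hEk k hkm
      have hk0 : E k = w (k - 1) := by
        have h := hEk (k - 1) (by omega)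
        rwa [Nat.sub_add_cancel h0k] at h
      have hs := hstep (k - 1) (by omega)
      rw [Nat.sub_add_cancel h0k] at hs
      rw [hk1, hk0]
      exact hs
  set V : ℕ → ℤ := fun k => (E k : ℤ) with hV
  set G : ℕ → ℤ := fun k => V k ^ 2 * (V (k + 1) - V k) with hG
  have key : ∀ k < m,
      4 * ((if IsThick m w k then (w k : ℤ) ^ 2 else 0) -
           (if IsThin m w k then (w k : ℤ) ^ 2 else 0)) =
        G k - G (k + 1) + 4 * (V k + V (k + 1)) := by
    intro k hk
    have hw : (w k : ℤ) = V (k + 1) := by simp only [hV]; rw [hEk k hk]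
    have hthick : IsThick m w k ↔ E k < E (k + 1) ∧ E (k + 2) < E (k + 1) := by
      rw [IsThick, ← hE]
    have hthin : IsThin m w k ↔ E (k + 1) < E k ∧ E (k + 1) < E (k + 2) := by
      rw [IsThin, ← hE]
    have h1 := hstepE k (le_of_lt hk)
    have h2 : E (k + 2) = E (k + 1) + 2 ∨ E (k + 1) = E (k + 2) + 2 := hstepE (k + 1) hk
    rcases h1 with h1 | h1 <;> rcases h2 with h2 | h2
    · rw [if_neg (by rw [hthick]; omega), if_neg (by rw [hthin]; omega)]
      simp only [hG, hV, show k + 1 + 1 = k + 2 from rfl]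
      have z1 : ((E (k+1) : ℤ)) = (E k : ℤ) + 2 := by exact_mod_cast h1
      have z2 : ((E (k+2) : ℤ)) = (E (k+1) : ℤ) + 2 := by exact_mod_cast h2
      rw [z2, z1]; ring
    · rw [if_pos (by rw [hthick]; omega), if_neg (by rw [hthin]; omega)]
      rw [hw]
      simp only [hG, hV, show k + 1 + 1 = k + 2 from rfl]
      have z1 : ((E (k+1) : ℤ)) = (E k : ℤ) + 2 := by exact_mod_cast h1
      have z2 : ((E (k+1) : ℤ)) = (E (k+2) : ℤ) + 2 := by exact_mod_cast h2
      rw [show ((E (k+2):ℤ)) = (E (k+1):ℤ) - 2 by omega, z1]; ring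
    · rw [if_neg (by rw [hthick]; omega), if_pos (by rw [hthin]; omega)]
      rw [hw]
      simp only [hG, hV, show k + 1 + 1 = k + 2 from rfl]
      have z1 : ((E k : ℤ)) = (E (k+1) : ℤ) + 2 := by exact_mod_cast h1
      have z2 : ((E (k+2) : ℤ)) = (E (k+1) : ℤ) + 2 := by exact_mod_cast h2
      rw [z2, z1]; ring
    · rw [if_neg (by rw [hthick]; omega), if_neg (by rw [hthin]; omega)]
      simp only [hG, hV, show k + 1 + 1 = k + 2 from rfl]
      have z1 : ((E k : ℤ)) = (E (k+1) : ℤ) + 2 := by exact_mod_cast h1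
      have z2 : ((E (k+1) : ℤ)) = (E (k+2) : ℤ) + 2 := by exact_mod_cast h2
      rw [z1, show ((E (k+2):ℤ)) = (E (k+1):ℤ) - 2 by omega]; ring
  have hsum : (∑ k ∈ (Finset.range m).filter (fun k => IsThick m w k), (w k : ℤ) ^ 2) -
      (∑ k ∈ (Finset.range m).filter (fun k => IsThin m w k), (w k : ℤ) ^ 2) =
      ∑ k ∈ Finset.range m,
        ((if IsThick m w k then (w k : ℤ) ^ 2 else 0) -
         (if IsThin m w k then (w k : ℤ) ^ 2 else 0)) := by
    rw [Finset.sum_sub_distrib, Finset.sum_filter, Finset.sum_filter]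
  have hmul : ∀ X S : ℤ, 4 * X = 8 * S → 2 * S = X := by intro X S h; omega
  rw [hsum]
  apply hmul
  rw [Finset.mul_sum]
  rw [Finset.sum_congr rfl (fun k hk => key k (Finset.mem_range.mp hk))]
  rw [Finset.sum_add_distrib, Finset.sum_range_sub' G]
  have hG0 : G 0 = 0 := by simp [hG, hV, hE0]
  have hGm : G m = -8 := by simp only [hG, hV]; rw [hEm, hEm1]; norm_num
  have hVsum1 : ∑ k ∈ Finset.range m, V (k + 1) = ∑ k ∈ Finset.range m, (w k : ℤ) := by
    apply Finset.sum_congr rfl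
    intro k hk
    simp only [hV]
    rw [hEk k (Finset.mem_range.mp hk)]
  have hVsum0 : ∑ k ∈ Finset.range m, V k =
      (∑ k ∈ Finset.range m, (w k : ℤ)) - 2 := by
    have h1 : ∑ k ∈ Finset.range (m + 1), V k =
        ∑ k ∈ Finset.range m, V k + V m := Finset.sum_range_succ V m
    have h2 : ∑ k ∈ Finset.range (m + 1), V k =
        (∑ k ∈ Finset.range m, V (k + 1)) + V 0 := Finset.sum_range_succ' V m
    have hVm : V m = 2 := by simp [hV, hEm]
    have hV0 : V 0 = 0 := by simp [hV, hE0]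
    rw [hVsum1] at h2
    omega
  have h5 : ∑ k ∈ Finset.range m, 4 * (V k + V (k + 1)) =
      4 * ((∑ k ∈ Finset.range m, V k) + ∑ k ∈ Finset.range m, V (k + 1)) := by
    rw [← Finset.sum_add_distrib, Finset.mul_sum]
  rw [h5, hG0, hGm, hVsum0, hVsum1]
  ring
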